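/- Let e be a positive integer and let (x, y, z, w) be a solution in positive integers of (4^e−1)^x + 4^{e·y} + (4^e+1)^z = (4^e+2)^w such that (e, x, y, z, w) ≠ (1, 3, 1, 1, 2) and (e, x, y, z, w) ≠ (1, 3, 3, 3, 3). Then w > 4^e / (μ_x + μ_z), where μ_x = log(4^e+2)/log(4^e−1) and μ_z = log(4^e+2)/log(4^e+1). -/

import Mathlib

/-!
Reducing the equation modulo 4, 3 and 4^e + 1 shows that x, y and z are odd. Write N = 4^e.
To second order in N the left side is N (x + z + ε) + N² (C(z,2) - C(x,2)) modulo N³, with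
ε = 1 if y = 1 and ε = 0 otherwise (y = 2 is excluded by parity), while the right side is
2^w (1 + N/2)^w. If x + z < N, comparing 2-adic valuations forces x + z + ε = 2^v with v ≥ 1 and
w = 2e + v, and then the N² coefficients give C(z,2) - C(x,2) ≡ 2^(v-1) w (mod 2), which is
impossible for odd x, z with x + z = 2^v. Hence x + z ≥ 4^e, and since (4^e - 1)^x and
(4^e + 1)^z are smaller than (4^e + 2)^w, x < w μ_x and z < w μ_z.
-/

open Real

theorem exists_one_add_pow_eq {R : Type*} [CommRing R] (t : R) (n : ℕ) :
    ∃ A : R, (1 + t) ^ n = 1 + n * t + n.choose 2 * t ^ 2 + t ^ 3 * A := by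
  induction n with
  | zero => exact ⟨0, by simp⟩
  | succ n ih =>
    obtain ⟨A, hA⟩ := ih
    refine ⟨n.choose 2 + (1 + t) * A, ?_⟩
    rw [pow_succ, hA, Nat.choose_succ_succ', Nat.choose_one_right]
    push_cast
    ring

theorem Nat.choose_two_two_mul_add_one (i : ℕ) : (2 * i + 1).choose 2 = i * (2 * i + 1) := by
  rw [Nat.choose_two_right, Nat.add_sub_cancel, mul_comm, mul_assoc,
    Nat.mul_div_cancel_left _ two_pos, mul_comm]

theorem choose_two_sub_choose_two_modEq (i j : ℕ) :
    ((2 * j + 1).choose 2 - (2 * i + 1).choose 2 : ℤ) ≡ i + j [ZMOD 2] := by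
  rw [Nat.choose_two_two_mul_add_one, Nat.choose_two_two_mul_add_one]
  exact Int.modEq_iff_dvd.mpr ⟨i + i ^ 2 - j ^ 2, by push_cast; ring⟩

theorem exists_sub_one_pow_add_pow_add_add_one_pow_eq (N : ℤ) {x y : ℕ} (z : ℕ) (hx : Odd x)
    (hy : Odd y) : ∃ ε G : ℤ, 0 ≤ ε ∧ ε ≤ 1 ∧ (N - 1) ^ x + N ^ y + (N + 1) ^ z =
      N * (x + z + ε + N * (z.choose 2 - x.choose 2) + N ^ 2 * G) := by
  obtain ⟨A, hA⟩ := exists_one_add_pow_eq (-N) x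
  obtain ⟨B, hB⟩ := exists_one_add_pow_eq N z
  have hNx : (N - 1) ^ x = -(1 + -N) ^ x := by rw [← hx.neg_pow]; ring
  rw [hNx, hA, add_comm N, hB]
  obtain ⟨c, rfl⟩ := hy
  rcases c with _ | c
  · exact ⟨1, A + B, by norm_num, le_rfl, by ring⟩
  · exact ⟨0, A + B + N ^ (2 * c), le_rfl, zero_le_one, by ring⟩

theorem exists_eq_two_pow_mul_of_two_pow_mul_eq {a b : ℕ} {q m : ℤ} (hm : Odd m)
    (h : 2 ^ a * q = 2 ^ b * m) : ∃ v, b = a + v ∧ q = 2 ^ v * m := by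
  obtain hab | hab := le_or_gt a b
  · obtain ⟨v, rfl⟩ := Nat.exists_eq_add_of_le hab
    rw [pow_add, mul_assoc] at h
    exact ⟨v, rfl, mul_left_cancel₀ (by positivity) h⟩
  · obtain ⟨c, rfl⟩ := Nat.exists_eq_add_of_lt hab
    rw [pow_add, pow_add, mul_assoc, mul_assoc] at h
    have hm' := mul_left_cancel₀ (pow_ne_zero b (two_ne_zero (α := ℤ))) h
    rw [← hm'] at hm
    exact absurd hm (Int.not_odd_iff_even.mpr ⟨2 ^ c * q, by ring⟩)

theorem eq_two_pow_of_dvd_sub {k v : ℕ} {s : ℤ} (hs : 0 < s) (hsk : s < 2 ^ k)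
    (h : 2 ^ k ∣ s - 2 ^ v) : s = 2 ^ v := by
  have hvk : (2 : ℤ) ^ v < 2 ^ k := by
    by_contra! hkv
    have hks : (2 : ℤ) ^ k ∣ s := by
      have := h.add (pow_dvd_pow 2 ((pow_le_pow_iff_right₀ one_lt_two).mp hkv))
      rwa [sub_add_cancel] at this
    exact absurd (Int.le_of_dvd hs hks) (not_le.mpr hsk)
  have h2v : (0 : ℤ) < 2 ^ v := by positivity
  have := Int.eq_zero_of_abs_lt_dvd h (abs_sub_lt_iff.mpr ⟨by linarith, by linarith⟩)
  linarith

theorem exists_eq_two_pow_of_four_pow_mul_eq {e w : ℕ} (he : e ≠ 0) {s D G : ℤ} (hs : 1 < s)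
    (hsN : s < 4 ^ e) (h : 4 ^ e * (s + 4 ^ e * D + (4 ^ e) ^ 2 * G) = (4 ^ e + 2) ^ w) :
    ∃ v : ℕ, s = 2 ^ (v + 1) ∧ D ≡ 2 ^ v * (2 * e + v + 1) [ZMOD 2] := by
  obtain ⟨m, rfl⟩ : ∃ m, e = m + 1 := ⟨e - 1, by omega⟩
  have hN : (4 : ℤ) ^ (m + 1) = 2 * (2 * 4 ^ m) := by ring
  have hN2 : (4 : ℤ) ^ (m + 1) = 2 ^ (2 * (m + 1)) := by rw [pow_mul]; norm_num
  generalize ht : 2 * (4 : ℤ) ^ m = t at hN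
  rw [hN] at h hsN hN2
  obtain ⟨v, hw, hQ⟩ := exists_eq_two_pow_mul_of_two_pow_mul_eq (a := 2 * (m + 1)) (b := w)
    (Odd.pow ⟨4 ^ m, by rw [← ht]; ring⟩ : Odd ((1 + t) ^ w))
    (by rw [← hN2, h, ← mul_pow]; ring_nf)
  obtain ⟨A, hA⟩ := exists_one_add_pow_eq t w
  -- for `v = 0` this needs `w = 2 * e` to be even
  have hwt : 2 * t ∣ 2 ^ v * w * t := by
    rcases v with _ | u
    · exact ⟨m + 1, by rw [hw]; push_cast; ring⟩
    · exact ⟨2 ^ u * w, by ring⟩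
  obtain ⟨c, hc⟩ := hwt
  have hdvd : 2 * t ∣ s - 2 ^ v :=
    ⟨c + 2 ^ v * 4 ^ m * (w.choose 2 + t * A) - D - 2 * t * G, by
      subst ht; linear_combination hQ + hc + 2 ^ v * hA⟩
  rw [hN2] at hsN hdvd
  have hs_eq : s = 2 ^ v := eq_two_pow_of_dvd_sub (by linarith) hsN hdvd
  obtain ⟨u, rfl⟩ : ∃ u, v = u + 1 := ⟨v - 1, by rcases v with _ | v <;> simp_all⟩
  have ht0 : 2 * t ≠ 0 := by rw [hN2]; positivity
  have hD : D + 2 * t * G = 2 ^ u * (w + w.choose 2 * t + t ^ 2 * A) :=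
    mul_left_cancel₀ ht0 (by rw [hs_eq] at hQ; linear_combination hQ + 2 ^ (u + 1) * hA)
  refine ⟨u, hs_eq, Int.modEq_iff_dvd.mpr ⟨t * G - 2 ^ u * 4 ^ m * (w.choose 2 + t * A), ?_⟩⟩
  have hw' : (w : ℤ) = 2 * (m + 1) + u + 1 := by rw [hw]; push_cast; ring
  subst ht
  push_cast
  linear_combination -hD - 2 ^ u * hw'

/-- The equation, read in `ℤ` so that `4 ^ e - 1` is not truncated. -/
def IsSolution (e x y z w : ℕ) : Prop :=
  ((4 : ℤ) ^ e - 1) ^ x + (4 : ℤ) ^ (e * y) + ((4 : ℤ) ^ e + 1) ^ z = ((4 : ℤ) ^ e + 2) ^ w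

namespace IsSolution

variable {e x y z w : ℕ}

theorem two_le_w (h : IsSolution e x y z w) (he : e ≠ 0) (hy : y ≠ 0) (hz : z ≠ 0) :
    2 ≤ w := by
  by_contra! hw
  have hN : (4 : ℤ) ≤ 4 ^ e := le_self_pow₀ (by norm_num) he
  have h1 : ((4 : ℤ) ^ e + 2) ^ w ≤ 4 ^ e + 2 :=
    (pow_le_pow_right₀ (by linarith) (by omega)).trans_eq (pow_one _)
  have h2 : (4 : ℤ) ^ e ≤ 4 ^ (e * y) :=
    pow_le_pow_right₀ (by norm_num) (Nat.le_mul_of_pos_right e (Nat.pos_of_ne_zero hy))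
  have h3 : (4 : ℤ) ^ e + 1 ≤ (4 ^ e + 1) ^ z := le_self_pow₀ (by linarith) hz
  have h4 : (0 : ℤ) ≤ (4 ^ e - 1) ^ x := pow_nonneg (by linarith) x
  unfold IsSolution at h
  linarith

theorem odd_x (h : IsSolution e x y z w) (he : e ≠ 0) (hy : y ≠ 0) (hw : 2 ≤ w) : Odd x := by
  have h4 := congrArg (Int.cast : ℤ → ZMod 4) h
  push_cast at h4
  obtain ⟨w, rfl⟩ := Nat.exists_eq_add_of_le hw
  rw [show (4 : ZMod 4) = 0 from rfl, zero_pow he, zero_pow (mul_ne_zero he hy), pow_add,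
    show (0 + 2 : ZMod 4) ^ 2 = 0 from rfl] at h4
  simp only [zero_sub, zero_add, one_pow, add_zero, zero_mul] at h4
  refine (Nat.even_or_odd x).resolve_left fun hx => ?_
  rw [hx.neg_one_pow] at h4
  exact absurd h4 (by decide)

theorem odd_z (h : IsSolution e x y z w) (hx : x ≠ 0) (hw : w ≠ 0) : Odd z := by
  have h3 := congrArg (Int.cast : ℤ → ZMod 3) h
  push_cast at h3
  rw [show (4 : ZMod 3) = 1 from rfl] at h3
  simp only [one_pow] at h3
  rw [sub_self, show (1 + 1 : ZMod 3) = -1 from rfl, show (1 + 2 : ZMod 3) = 0 from rfl,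
    zero_pow hx, zero_pow hw, zero_add] at h3
  refine (Nat.even_or_odd z).resolve_left fun hz => ?_
  rw [hz.neg_one_pow] at h3
  exact absurd h3 (by decide)

theorem odd_y (h : IsSolution e x y z w) (he : e ≠ 0) (hz : z ≠ 0) : Odd y := by
  set n := 4 ^ e + 1
  have hq := congrArg (Int.cast : ℤ → ZMod n) h
  have h4 : (4 : ZMod n) ^ e = -1 := by
    have := ZMod.natCast_self n
    push_cast [n] at this
    exact eq_neg_of_add_eq_zero_left this
  push_cast at hq
  rw [pow_mul, h4, show (-1 + 1 : ZMod n) = 0 by ring, zero_pow hz,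
    show (-1 + 2 : ZMod n) = 1 by ring, one_pow] at hq
  refine (Nat.even_or_odd y).resolve_left fun hy => ?_
  rw [hy.neg_one_pow, add_zero, add_eq_right, show (-1 - 1 : ZMod n) = -2 by ring, neg_pow,
    (isUnit_neg_one.pow x).mul_right_eq_zero] at hq
  have hdvd : n ∣ 2 ^ x := (ZMod.natCast_eq_zero_iff _ _).mp (by exact_mod_cast hq)
  have hn : Odd n := (Nat.even_pow.mpr ⟨by decide, he⟩).add_one
  have := (hn.coprime_two_right.pow_right x).eq_one_of_dvd hdvd
  have : 0 < 4 ^ e := by positivity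
  omega

theorem four_pow_le_add (h : IsSolution e x y z w) (he : e ≠ 0) (hx : x ≠ 0) (hy : y ≠ 0)
    (hz : z ≠ 0) : 4 ^ e ≤ x + z := by
  have hw := h.two_le_w he hy hz
  have hxo := h.odd_x he hy hw
  obtain ⟨ε, G, hε0, hε1, hexp⟩ :=
    exists_sub_one_pow_add_pow_add_add_one_pow_eq ((4 : ℤ) ^ e) z hxo (h.odd_y he hz)
  obtain ⟨i, rfl⟩ := hxo
  obtain ⟨j, rfl⟩ := h.odd_z hx (by omega)
  unfold IsSolution at h
  rw [pow_mul, hexp] at h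
  by_contra! hlt
  obtain ⟨r, hr⟩ : Even (4 ^ e) := Nat.even_pow.mpr ⟨by decide, he⟩
  have hsN : ((2 * i + 1 : ℕ) : ℤ) + (2 * j + 1 : ℕ) + ε < 4 ^ e := by
    have : ((4 ^ e : ℕ) : ℤ) = 4 ^ e := by push_cast; rfl
    omega
  obtain ⟨v, hs, hD⟩ := exists_eq_two_pow_of_four_pow_mul_eq he (by push_cast; omega) hsN h
  have hij : (i + j + 1 : ℤ) = 2 ^ v := by
    rw [pow_succ] at hs
    push_cast at hs
    omega
  obtain ⟨q, hq⟩ : Even ((2 : ℤ) ^ v * (2 * e + v)) := by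
    rcases v with _ | u
    · exact ⟨e, by ring⟩
    · exact ⟨2 ^ u * (2 * e + u + 1), by push_cast; ring⟩
  obtain ⟨c, hc⟩ := Int.modEq_iff_dvd.mp ((choose_two_sub_choose_two_modEq i j).symm.trans hD)
  have : 2 * c = 2 * q + 1 := by linear_combination -hc + hq - hij
  omega

end IsSolution

theorem lt_mul_log_div_log {a c : ℝ} (ha : 1 < a) {x w : ℕ} (h : a ^ x < c ^ w) :
    (x : ℝ) < w * (log c / log a) := by
  have hlog := log_lt_log (by positivity) h
  rw [log_pow, log_pow] at hlog
  rwa [← mul_div_assoc, lt_div_iff₀ (log_pos ha)]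

theorem w_lower_bound_general (e x y z w : ℕ) (he : 0 < e)
    (hx : 0 < x) (hy : 0 < y) (hz : 0 < z)
    (heq : (4 ^ e - 1) ^ x + 4 ^ (e * y) + (4 ^ e + 1) ^ z = (4 ^ e + 2) ^ w) :
    (w : ℝ) > (4 : ℝ) ^ e /
      (Real.log ((4 : ℝ) ^ e + 2) / Real.log ((4 : ℝ) ^ e - 1) +
       Real.log ((4 : ℝ) ^ e + 2) / Real.log ((4 : ℝ) ^ e + 1)) := by
  have hsol : IsSolution e x y z w := by
    have := congrArg (Nat.cast : ℕ → ℤ) heq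
    push_cast [Nat.cast_sub (Nat.one_le_pow e 4 (by norm_num))] at this
    exact this
  have hxz : (4 : ℝ) ^ e ≤ x + z := by
    exact_mod_cast hsol.four_pow_le_add he.ne' hx.ne' hy.ne' hz.ne'
  have hR := congrArg (Int.cast : ℤ → ℝ) hsol
  push_cast at hR
  have hN : (4 : ℝ) ≤ 4 ^ e := le_self_pow₀ (by norm_num) he.ne'
  have hpos₁ := pow_pos (by linarith : (0 : ℝ) < 4 ^ e - 1) x
  have hpos₂ := pow_pos (by norm_num : (0 : ℝ) < 4) (e * y)
  have hpos₃ := pow_pos (by linarith : (0 : ℝ) < 4 ^ e + 1) z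
  have hlx := lt_mul_log_div_log (by linarith)
    (by linarith : ((4 : ℝ) ^ e - 1) ^ x < (4 ^ e + 2) ^ w)
  have hlz := lt_mul_log_div_log (by linarith)
    (by linarith : ((4 : ℝ) ^ e + 1) ^ z < (4 ^ e + 2) ^ w)
  have hμ : 0 < log ((4 : ℝ) ^ e + 2) / log ((4 : ℝ) ^ e - 1) +
      log ((4 : ℝ) ^ e + 2) / log ((4 : ℝ) ^ e + 1) := by
    have hlog : ∀ a : ℝ, 1 < a → 0 < log ((4 : ℝ) ^ e + 2) / log a := fun a ha =>
      div_pos (log_pos (by linarith)) (log_pos ha)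
    exact add_pos (hlog _ (by linarith)) (hlog _ (by linarith))
  rw [gt_iff_lt, div_lt_iff₀ hμ, mul_add]
  linarith

theorem w_lower_bound (e x y z w : ℕ) (he : 0 < e)
    (hx : 0 < x) (hy : 0 < y) (hz : 0 < z) (hw : 0 < w)
    (heq : (4 ^ e - 1) ^ x + 4 ^ (e * y) + (4 ^ e + 1) ^ z = (4 ^ e + 2) ^ w)
    (hne1 : (e, x, y, z, w) ≠ (1, 3, 1, 1, 2))
    (hne2 : (e, x, y, z, w) ≠ (1, 3, 3, 3, 3)) :
    (w : ℝ) > (4 : ℝ) ^ e /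
      (Real.log ((4 : ℝ) ^ e + 2) / Real.log ((4 : ℝ) ^ e - 1) +
       Real.log ((4 : ℝ) ^ e + 2) / Real.log ((4 : ℝ) ^ e + 1)) :=
  w_lower_bound_general e x y z w he hx hy hz heq
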